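/- arXiv:1812.02721 — 2 statements merged into one kernel-verified Lean document; each statement's English description precedes it below -/
import Mathlib

section
/- Let p be a prime, L = p^N, h ∈ 𝔽_p[x] with h(1) ≠ 0, and 0 ≤ m < L. Then (u−1)^m·(t_h(U_m) − U_m) = 0 in R; equivalently, there exist polynomials q_{m′} ∈ 𝔽_p[v] for 0 ≤ m′ < m such that t_h(U_m) = U_m + Σ_{m′<m} U_{m′}(u)·q_{m′}(v) in R. -/
open Polynomial

noncomputable section

/-- The ring `R = 𝔽_p[u,v]/(u^L − 1, v^L − 1)`, modelled as the group algebra of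
`ℤ/L × ℤ/L` over `𝔽_p`; the exponent pair of a monomial `u^i v^j` is `(i, j)`. -/
abbrev R (p L : ℕ) : Type := AddMonoidAlgebra (ZMod p) (ZMod L × ZMod L)

/-- The image of `u` in `R`. -/
def uu (p L : ℕ) : R p L := AddMonoidAlgebra.single ((1 : ZMod L), (0 : ZMod L)) 1

/-- The image of `v` in `R`. -/
def vv (p L : ℕ) : R p L := AddMonoidAlgebra.single ((0 : ZMod L), (1 : ZMod L)) 1

/-- `u` as a unit of `R`. -/
def uUnit (p L : ℕ) : (R p L)ˣ where
  val := AddMonoidAlgebra.single ((1 : ZMod L), (0 : ZMod L)) 1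
  inv := AddMonoidAlgebra.single ((-1 : ZMod L), (0 : ZMod L)) 1
  val_inv := by
    rw [AddMonoidAlgebra.single_mul_single]
    simp [AddMonoidAlgebra.one_def]
    rfl
  inv_val := by
    rw [AddMonoidAlgebra.single_mul_single]
    simp [AddMonoidAlgebra.one_def]
    rfl

/-- `v` as a unit of `R`. -/
def vUnit (p L : ℕ) : (R p L)ˣ where
  val := AddMonoidAlgebra.single ((0 : ZMod L), (1 : ZMod L)) 1
  inv := AddMonoidAlgebra.single ((0 : ZMod L), (-1 : ZMod L)) 1
  val_inv := by
    rw [AddMonoidAlgebra.single_mul_single]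
    simp [AddMonoidAlgebra.one_def]
    rfl
  inv_val := by
    rw [AddMonoidAlgebra.single_mul_single]
    simp [AddMonoidAlgebra.one_def]
    rfl

/-- `deg_v W`: the `v`-degree of the canonical representative of `W`
(each exponent of `v` is represented by its value in `{0, …, L−1}`). -/
def degV {p L : ℕ} (W : R p L) : ℕ := W.coeff.support.sup fun a => a.2.val

/-- The evolution operator `t_h`: multiplication by `h(v)⁻¹ · h(uv)`
(`Ring.inverse` is the genuine inverse whenever `h(v)` is a unit, in particular when
`h(1) ≠ 0`). -/
def th {p L : ℕ} (h : (ZMod p)[X]) (W : R p L) : R p L :=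
  Ring.inverse (aeval (vv p L) h) * aeval (uu p L * vv p L) h * W

/-- `W` is consistently `ℓ`-local under `t_h`: `t_h^n W` is `ℓ`-local for all `n ≥ 0`. -/
def ConsLocal {p L : ℕ} (h : (ZMod p)[X]) (ℓ : ℕ) (W : R p L) : Prop :=
  ∀ n : ℕ, degV ((th h)^[n] W) ≤ ℓ

/-- `U_m(u) = (u − 1)^(L − 1 − m)`. -/
def Um (p L : ℕ) (m : ℕ) : R p L := (uu p L - 1) ^ (L - 1 - m)

/-- `g` is the (unique) expansion of `W` as `W = Σ_{m<L} U_m(u) · g_m(v)`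
with `deg g_m < L` for all `m < L`. -/
def IsExpansion (p L : ℕ) (W : R p L) (g : ℕ → (ZMod p)[X]) : Prop :=
  (∀ m < L, (g m).degree < (L : WithBot ℕ)) ∧
    W = ∑ m ∈ Finset.range L, Um p L m * aeval (vv p L) (g m)

/-- `(V_m)` generates an optimal basis for `t_h` at locality `ℓ` at size `L`:
for every `ℓ`-local `W ∈ R`, `W` is consistently `ℓ`-local under `t_h` iff
`V_m ∣ W_m` (in `𝔽_p[v]`) for all `m < L`, where `(W_m)` is the expansion of `W`
in the basis `(U_m)`. -/
def GenOptBasis (p L : ℕ) (h : (ZMod p)[X]) (V : ℕ → (ZMod p)[X]) (ℓ : ℕ) : Prop :=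
  ∀ W : R p L, degV W ≤ ℓ →
    (ConsLocal h ℓ W ↔ ∀ g : ℕ → (ZMod p)[X], IsExpansion p L W g → ∀ m < L, V m ∣ g m)

lemma single_nat_pow (p L : ℕ) (g : ZMod L × ZMod L) (a : ℕ) :
    (AddMonoidAlgebra.single g (1 : ZMod p)) ^ a = AddMonoidAlgebra.single (a • g) 1 := by
  rw [AddMonoidAlgebra.single_pow, one_pow]

lemma nil_aux (p N : ℕ) [Fact p.Prime] (g : ZMod (p ^ N) × ZMod (p ^ N)) :
    (AddMonoidAlgebra.single g (1 : ZMod p) - 1) ^ (p ^ N) = 0 := by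
  haveI : CharP (R p (p ^ N)) p := charP_of_injective_algebraMap' (ZMod p) p
  rw [sub_pow_char_pow, single_nat_pow, one_pow]
  have hg : (p ^ N) • g = 0 := by
    rw [← Nat.cast_smul_eq_nsmul (ZMod (p ^ N)), ZMod.natCast_self, zero_smul]
  rw [hg, AddMonoidAlgebra.one_def, sub_self]

lemma uu_pow (p L : ℕ) (a : ℕ) :
    (uu p L) ^ a = AddMonoidAlgebra.single (((a : ZMod L)), (0 : ZMod L)) 1 := by
  rw [uu, single_nat_pow]
  congr 1
  simp [Prod.smul_def, nsmul_eq_mul]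

lemma vv_pow (p L : ℕ) (a : ℕ) :
    (vv p L) ^ a = AddMonoidAlgebra.single ((0 : ZMod L), ((a : ZMod L))) 1 := by
  rw [vv, single_nat_pow]
  congr 1
  simp [Prod.smul_def, nsmul_eq_mul]

lemma single_decomp (p L : ℕ) [NeZero L] (a : ZMod L × ZMod L) (c : ZMod p) :
    AddMonoidAlgebra.single a c =
      algebraMap (ZMod p) (R p L) c * ((uu p L) ^ a.1.val * (vv p L) ^ a.2.val) := by
  rw [uu_pow, vv_pow, AddMonoidAlgebra.single_mul_single]
  have : algebraMap (ZMod p) (R p L) c = AddMonoidAlgebra.single (0 : ZMod L × ZMod L) c := rfl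
  rw [this, AddMonoidAlgebra.single_mul_single]
  simp [ZMod.natCast_val, ZMod.cast_id]

lemma uu_pow_mul (p L m : ℕ) (hm : m < L) (hx : (uu p L - 1) ^ L = 0) (a : ℕ) :
    (uu p L) ^ a * (uu p L - 1) ^ (L - m) =
      ∑ m' ∈ Finset.range m,
        Um p L m' * algebraMap (ZMod p) (R p L) ((a.choose (m - 1 - m') : ZMod p)) := by
  set x : R p L := uu p L - 1 with hxdef
  have huu : uu p L = x + 1 := by rw [hxdef]; ring
  have hzero : ∀ k, m ≤ k → x ^ (k + (L - m)) = 0 := fun k hk =>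
    pow_eq_zero_of_le (by omega) hx
  rw [huu, add_pow, Finset.sum_mul]
  have hterm : ∀ k, x ^ k * 1 ^ (a - k) * (a.choose k : R p L) * x ^ (L - m)
      = (a.choose k : R p L) * x ^ (k + (L - m)) := by
    intro k; rw [one_pow, pow_add]; ring
  simp only [hterm]
  rw [show ∑ k ∈ Finset.range (a + 1), (a.choose k : R p L) * x ^ (k + (L - m))
      = ∑ k ∈ Finset.range (max (a + 1) m), (a.choose k : R p L) * x ^ (k + (L - m)) from
    Finset.sum_subset (by simp [Finset.range_subset]; intros; omega) (fun k _ hk => by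
      rw [Nat.choose_eq_zero_of_lt (by simp at hk; omega), Nat.cast_zero, zero_mul])]
  rw [show ∑ k ∈ Finset.range (max (a + 1) m), (a.choose k : R p L) * x ^ (k + (L - m))
      = ∑ k ∈ Finset.range m, (a.choose k : R p L) * x ^ (k + (L - m)) from
    (Finset.sum_subset (by simp [Finset.range_subset]; intros; omega) (fun k _ hk => by
      rw [hzero k (by simp at hk; omega), mul_zero])).symm]
  rw [← Finset.sum_range_reflect]
  refine Finset.sum_congr rfl fun j hj => ?_
  simp only [Finset.mem_range] at hj
  rw [Um, show m - 1 - j + (L - m) = L - 1 - j by omega]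
  rw [map_natCast]
  ring

lemma key (p L m : ℕ) [NeZero L] (hm : m < L) (hx : (uu p L - 1) ^ L = 0) (y : R p L) :
    ∃ q : ℕ → (ZMod p)[X], y * (uu p L - 1) ^ (L - m) =
      ∑ m' ∈ Finset.range m, Um p L m' * aeval (vv p L) (q m') := by
  induction y using AddMonoidAlgebra.induction_linear with
  | zero => exact ⟨0, by simp⟩
  | add f g hf hg =>
    obtain ⟨qf, hqf⟩ := hf
    obtain ⟨qg, hqg⟩ := hg
    refine ⟨qf + qg, ?_⟩
    rw [add_mul, hqf, hqg, ← Finset.sum_add_distrib]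
    refine Finset.sum_congr rfl fun j _ => ?_
    rw [Pi.add_apply, map_add, mul_add]
  | single a c =>
    refine ⟨fun m' => C (c * (a.fst.val.choose (m - 1 - m') : ZMod p)) * X ^ a.snd.val, ?_⟩
    rw [single_decomp p L a c, mul_assoc, mul_comm ((uu p L) ^ a.1.val) ((vv p L) ^ a.2.val),
      mul_assoc, uu_pow_mul p L m hm hx, Finset.mul_sum, Finset.mul_sum]
    refine Finset.sum_congr rfl fun j _ => ?_
    simp only [map_mul, aeval_C, aeval_X_pow, map_mul]
    ring

lemma hv_unit (p L : ℕ) [Fact p.Prime] (hvnil : (vv p L - 1) ^ L = 0)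
    (h : (ZMod p)[X]) (hh1 : h.eval 1 ≠ 0) : IsUnit (aeval (vv p L) h) := by
  have hdvd : (vv p L - 1) ∣ aeval (vv p L) h - algebraMap (ZMod p) (R p L) (h.eval 1) := by
    have H := sub_dvd_eval_sub (vv p L) 1 (h.map (algebraMap (ZMod p) (R p L)))
    rwa [eval_map, eval_map, ← aeval_def, Polynomial.eval₂_at_one] at H
  obtain ⟨s, hs⟩ := hdvd
  have hnil : IsNilpotent ((vv p L - 1) * s) :=
    Commute.isNilpotent_mul_right (Commute.all _ _) ⟨L, hvnil⟩
  have hu : IsUnit (algebraMap (ZMod p) (R p L) (h.eval 1)) :=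
    (isUnit_iff_ne_zero.mpr hh1).map _
  have heq : aeval (vv p L) h =
      (vv p L - 1) * s + algebraMap (ZMod p) (R p L) (h.eval 1) := by
    linear_combination hs
  rw [heq]
  exact hnil.isUnit_add_right_of_commute hu (Commute.all _ _)

/-- `(u−1)^m · (t_h U_m − U_m) = 0` in `R`; equivalently, `t_h U_m` equals
`U_m` plus a combination `Σ_{m'<m} U_{m'}(u) · q_{m'}(v)`. -/
theorem statement8 (p N : ℕ) (hp : p.Prime) (hN : 1 ≤ N)
    (h : (ZMod p)[X]) (hh1 : h.eval 1 ≠ 0) (m : ℕ) (hm : m < p ^ N) :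
    (uu p (p ^ N) - 1) ^ m * (th h (Um p (p ^ N) m) - Um p (p ^ N) m) = 0 ∧
      ∃ q : ℕ → (ZMod p)[X],
        th h (Um p (p ^ N) m) =
          Um p (p ^ N) m +
            ∑ m' ∈ Finset.range m, Um p (p ^ N) m' * aeval (vv p (p ^ N)) (q m') := by

  haveI : Fact p.Prime := ⟨hp⟩
  haveI : NeZero (p ^ N) := ⟨pow_ne_zero _ hp.pos.ne'⟩
  have hxL : (uu p (p ^ N) - 1) ^ (p ^ N) = 0 := by
    have := nil_aux p N ((1 : ZMod (p ^ N)), (0 : ZMod (p ^ N)))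
    rwa [show AddMonoidAlgebra.single ((1 : ZMod (p ^ N)), (0 : ZMod (p ^ N))) (1 : ZMod p)
      = uu p (p ^ N) from rfl] at this
  have hvL : (vv p (p ^ N) - 1) ^ (p ^ N) = 0 := by
    have := nil_aux p N ((0 : ZMod (p ^ N)), (1 : ZMod (p ^ N)))
    rwa [show AddMonoidAlgebra.single ((0 : ZMod (p ^ N)), (1 : ZMod (p ^ N))) (1 : ZMod p)
      = vv p (p ^ N) from rfl] at this
  have hvu : IsUnit (aeval (vv p (p ^ N)) h) := hv_unit p (p ^ N) hvL h hh1
  have hdvd : (uu p (p ^ N) - 1) ∣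
      aeval (uu p (p ^ N) * vv p (p ^ N)) h - aeval (vv p (p ^ N)) h := by
    have H := sub_dvd_eval_sub (uu p (p ^ N) * vv p (p ^ N)) (vv p (p ^ N))
      (h.map (algebraMap (ZMod p) (R p (p ^ N))))
    rw [eval_map, eval_map, ← aeval_def, ← aeval_def] at H
    refine dvd_trans ⟨vv p (p ^ N), by ring⟩ H
  obtain ⟨s, hs⟩ := hdvd
  have hinv : Ring.inverse (aeval (vv p (p ^ N)) h) * aeval (vv p (p ^ N)) h = 1 :=
    Ring.inverse_mul_cancel _ hvu
  have hpow : (uu p (p ^ N) - 1) * (uu p (p ^ N) - 1) ^ (p ^ N - 1 - m)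
      = (uu p (p ^ N) - 1) ^ (p ^ N - m) := by
    rw [← pow_succ']
    congr 1
    omega
  have hD : th h (Um p (p ^ N) m) - Um p (p ^ N) m =
      (Ring.inverse (aeval (vv p (p ^ N)) h) * s) * (uu p (p ^ N) - 1) ^ (p ^ N - m) := by
    rw [th, Um]
    have huv : aeval (uu p (p ^ N) * vv p (p ^ N)) h
        = aeval (vv p (p ^ N)) h + (uu p (p ^ N) - 1) * s := by
      linear_combination hs
    rw [huv]
    linear_combination ((uu p (p ^ N) - 1) ^ (p ^ N - 1 - m)) * hinv
      + (Ring.inverse (aeval (vv p (p ^ N)) h) * s) * hpow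
  obtain ⟨q, hq⟩ := key p (p ^ N) m hm hxL (Ring.inverse (aeval (vv p (p ^ N)) h) * s)
  constructor
  · rw [hD, show (uu p (p ^ N) - 1) ^ m * ((Ring.inverse (aeval (vv p (p ^ N)) h) * s) *
        (uu p (p ^ N) - 1) ^ (p ^ N - m))
      = (Ring.inverse (aeval (vv p (p ^ N)) h) * s) * (uu p (p ^ N) - 1) ^ (m + (p ^ N - m))
        by rw [pow_add]; ring,
      show m + (p ^ N - m) = p ^ N by omega, hxL, mul_zero]
  · exact ⟨q, sub_eq_iff_eq_add'.mp (hD.trans hq)⟩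

end
end

section
/- Let p be a prime, L = p^N, h ∈ 𝔽_p[x] with h(1) ≠ 0, and let r ≥ 1 be an integer not divisible by p. Then for every ℓ ≥ 0 and every W ∈ R: W is consistently ℓ-local under t_h if and only if W is consistently ℓ-local under t_{h^r}. -/
open Polynomial

noncomputable section

section Aux

lemma aux_aeval_pow (p : ℕ) [Fact p.Prime] {A : Type} [CommRing A] [Algebra (ZMod p) A]
    (h : (ZMod p)[X]) (x : A) (N : ℕ) :
    (aeval x h) ^ (p ^ N) = aeval (x ^ (p ^ N)) h := by
  induction N with
  | zero => simp
  | succ n ih =>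
    have key : h ^ p = expand (ZMod p) p h := by
      have := Polynomial.map_frobenius_expand p h
      rw [ZMod.frobenius_zmod, Polynomial.map_id] at this
      exact this.symm
    rw [pow_succ, pow_mul, ih, ← map_pow, key, expand_aeval, ← pow_mul, ← pow_succ]

lemma aux_aeval_one (p : ℕ) {A : Type} [CommRing A] [Algebra (ZMod p) A] (h : (ZMod p)[X]) :
    aeval (1 : A) h = algebraMap (ZMod p) A (h.eval 1) := by
  rw [← map_one (algebraMap (ZMod p) A), aeval_algebraMap_apply]
  simp

lemma aux_vv_pow (p L : ℕ) : vv p L ^ L = 1 := by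
  rw [vv, AddMonoidAlgebra.single_pow]
  simp [AddMonoidAlgebra.one_def, ZMod.natCast_self]
  rfl

lemma aux_uv_pow (p L : ℕ) : (uu p L * vv p L) ^ L = 1 := by
  rw [uu, vv, AddMonoidAlgebra.single_mul_single, AddMonoidAlgebra.single_pow]
  simp [AddMonoidAlgebra.one_def, ZMod.natCast_self, Prod.ext_iff]
  rfl

lemma aux_th_iterate {p L : ℕ} (h : (ZMod p)[X]) (W : R p L) (n : ℕ) :
    (th h)^[n] W =
      (Ring.inverse (aeval (vv p L) h) * aeval (uu p L * vv p L) h) ^ n * W := by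
  induction n with
  | zero => simp
  | succ k ih => rw [Function.iterate_succ_apply', ih, th, pow_succ]; ring

end Aux

/-- for `r ≥ 1` coprime to `p`, consistent `ℓ`-locality under `t_h` is
equivalent to consistent `ℓ`-locality under `t_{h^r}`. -/
theorem statement9 (p N : ℕ) (hp : p.Prime) (hN : 1 ≤ N)
    (h : (ZMod p)[X]) (hh1 : h.eval 1 ≠ 0) (r : ℕ) (hr : 1 ≤ r) (hpr : ¬ p ∣ r) :
    ∀ (ℓ : ℕ) (W : R p (p ^ N)), ConsLocal h ℓ W ↔ ConsLocal (h ^ r) ℓ W := by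
  intro ℓ W
  haveI : Fact p.Prime := ⟨hp⟩
  set a : R p (p ^ N) := aeval (vv p (p ^ N)) h with ha
  set b : R p (p ^ N) := aeval (uu p (p ^ N) * vv p (p ^ N)) h with hb
  set c : R p (p ^ N) := Ring.inverse a * b with hc
  have haL : a ^ (p ^ N) = algebraMap (ZMod p) (R p (p ^ N)) (h.eval 1) := by
    rw [ha, aux_aeval_pow, aux_vv_pow, aux_aeval_one]
  have hbL : b ^ (p ^ N) = algebraMap (ZMod p) (R p (p ^ N)) (h.eval 1) := by
    rw [hb, aux_aeval_pow, aux_uv_pow, aux_aeval_one]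
  have hu : IsUnit (algebraMap (ZMod p) (R p (p ^ N)) (h.eval 1)) :=
    (isUnit_iff_ne_zero.mpr hh1).map (algebraMap (ZMod p) (R p (p ^ N)))
  have hcL : c ^ (p ^ N) = 1 := by
    rw [hc, mul_pow, Ring.inverse_pow, haL, hbL, Ring.inverse_mul_cancel _ hu]
  have hiter : ∀ n : ℕ, (th h)^[n] W = c ^ n * W := fun n => aux_th_iterate h W n
  have hiter' : ∀ n : ℕ, (th (h ^ r))^[n] W = c ^ (r * n) * W := by
    intro n
    rw [aux_th_iterate, map_pow, map_pow, ← Ring.inverse_pow, ← mul_pow, ← ha, ← hb, ← hc,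
      ← pow_mul]
  constructor
  · intro H n
    rw [hiter']
    have := H (r * n)
    rwa [hiter] at this
  · intro H n
    have hL1 : 1 < p ^ N := Nat.one_lt_pow (by omega) hp.one_lt
    have hcop : Nat.Coprime r (p ^ N) :=
      Nat.Coprime.pow_right N ((hp.coprime_iff_not_dvd.mpr hpr).symm)
    obtain ⟨s, -, hs⟩ := Nat.exists_mul_mod_eq_one_of_coprime hcop hL1
    set k := s * n + n * p ^ N with hk
    have hrs : r * s ≡ 1 [MOD p ^ N] := by
      unfold Nat.ModEq
      rw [hs, Nat.mod_eq_of_lt hL1]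
    have hmod : n ≡ r * k [MOD p ^ N] := by
      have h1 : r * k = (r * s) * n + (r * n) * p ^ N := by ring
      have h2 : (r * n) * p ^ N ≡ 0 [MOD p ^ N] :=
        Nat.modEq_zero_iff_dvd.mpr ⟨r * n, mul_comm _ _⟩
      calc n = 1 * n + 0 := by ring
      _ ≡ (r * s) * n + (r * n) * p ^ N [MOD p ^ N] :=
        Nat.ModEq.add ((hrs.symm).mul_right n) h2.symm
      _ = r * k := h1.symm
    have hge : n ≤ r * k := by
      have h2 : n * p ^ N ≤ r * k := by
        calc n * p ^ N ≤ k := Nat.le_add_left _ _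
        _ ≤ r * k := Nat.le_mul_of_pos_left _ (by omega)
      calc n ≤ n * p ^ N := Nat.le_mul_of_pos_right _ (by omega)
      _ ≤ r * k := h2
    obtain ⟨t, ht⟩ : p ^ N ∣ r * k - n := (Nat.modEq_iff_dvd' hge).mp hmod
    have hck : c ^ (r * k) = c ^ n := by
      have he : r * k = n + p ^ N * t := by omega
      rw [he, pow_add, pow_mul, hcL, one_pow, mul_one]
    have := H k
    rw [hiter', hck] at this
    rwa [hiter]

end
end
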